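/- Let q, n be positive integers, let A ∈ ℝ^{q×q} be a symmetric matrix, and let ξ_1, …, ξ_n be independent Rademacher random vectors in ℝ^q. Then the variance of the sample average trace estimator satisfies Var[(1/n) ∑_{k=1}^n ξ_kᵀ A ξ_k] = (2/n) ∑_{i≠j} A_{ij}², where the sum ranges over all ordered pairs (i,j) with i ≠ j. -/

import Mathlib

open MeasureTheory ProbabilityTheory Matrix
open scoped ENNReal

/-- The Rademacher distribution on `ℝ`: values `+1` and `-1`, each with probability `1/2`. -/
noncomputable def rademacherDist : Measure ℝ :=
  (1 / 2 : ℝ≥0∞) • Measure.dirac (1 : ℝ) + (1 / 2 : ℝ≥0∞) • Measure.dirac (-1 : ℝ)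

/-- `ξ : Ω → ℝ^q` is a Rademacher random vector (w.r.t. the measure `μ`): its entries are
independent and identically distributed, taking values `±1` each with probability `1/2`. -/
def IsRademacherVector {Ω : Type*} [MeasurableSpace Ω] (μ : Measure Ω) {q : ℕ}
    (ξ : Ω → Fin q → ℝ) : Prop :=
  (∀ i, Measurable fun ω => ξ ω i) ∧
  iIndepFun (fun i ω => ξ ω i) μ ∧
  ∀ i, Measure.map (fun ω => ξ ω i) μ = rademacherDist

/-! Since `ξᵢ² = 1` and the entries are independent and centred, a monomial `∏ ξₜ ^ mₜ` has
expectation `1` if every `mₜ` is even and `0` otherwise. Hence `cov(ξᵢξⱼ, ξₖξₗ)` vanishes for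
`i = j` and, for `i ≠ j`, is `1` exactly when `(k, l) = (i, j)` or `(k, l) = (j, i)`. Expanding the
quadratic form bilinearly gives `Var(ξᵀAξ) = ∑_{i ≠ j} Aᵢⱼ (Aᵢⱼ + Aⱼᵢ)`, which is
`2 ∑_{i ≠ j} Aᵢⱼ²` for symmetric `A`, and averaging `n` independent copies divides this by `n`. -/

lemma integral_rademacherDist_pow (m : ℕ) :
    ∫ x, x ^ m ∂rademacherDist = if Even m then 1 else 0 := by
  have hint (a : ℝ) : Integrable (fun x : ℝ => x ^ m) (Measure.dirac a) :=
    integrable_dirac enorm_lt_top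
  rw [rademacherDist, integral_add_measure ((hint _).smul_measure (by simp))
    ((hint _).smul_measure (by simp)), integral_smul_measure, integral_smul_measure,
    integral_dirac, integral_dirac]
  rcases Nat.even_or_odd m with hm | hm
  · simp [hm, hm.neg_one_pow]; norm_num
  · simp [hm.neg_one_pow, Nat.not_even_iff_odd.2 hm]

section Parity

variable {α : Type*} [DecidableEq α]

lemma forall_even_boole_add_boole_iff (i j : α) :
    (∀ t, Even ((if i = t then 1 else 0) + (if j = t then 1 else 0))) ↔ i = j := by
  simp only [Nat.even_add, apply_ite Even, Nat.not_even_one, Even.zero]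
  exact ⟨fun h => by simpa [eq_comm] using h i, fun h t => by simp [h]⟩

lemma forall_even_boole_add_boole_add_boole_add_boole_iff (i j k l : α) :
    (∀ t, Even ((if i = t then 1 else 0) + (if j = t then 1 else 0) +
        (if k = t then 1 else 0) + (if l = t then 1 else 0))) ↔
      (i = j ∧ k = l) ∨ (i = k ∧ j = l) ∨ (i = l ∧ j = k) := by
  simp only [Nat.even_add, apply_ite Even, Nat.not_even_one, Even.zero]
  refine ⟨fun h => ?_, ?_⟩
  · have := h i; have := h j; have := h k
    grind
  · rintro (⟨rfl, rfl⟩ | ⟨rfl, rfl⟩ | ⟨rfl, rfl⟩) t <;> tauto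

end Parity

lemma Matrix.dotProduct_mulVec_self_eq_sum {n R : Type*} [Fintype n] [CommSemiring R]
    (A : Matrix n n R) (v : n → R) :
    v ⬝ᵥ A *ᵥ v = ∑ p : n × n, A p.1 p.2 * (v p.1 * v p.2) := by
  simp only [dotProduct, mulVec, Finset.mul_sum, Fintype.sum_prod_type]
  exact Finset.sum_congr rfl fun i _ => Finset.sum_congr rfl fun j _ => by ring

namespace IsRademacherVector

variable {Ω : Type*} [MeasurableSpace Ω] {μ : Measure Ω} {q : ℕ} {ξ : Ω → Fin q → ℝ}

lemma isProbabilityMeasure (h : IsRademacherVector μ ξ) : IsProbabilityMeasure μ :=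
  h.2.1.isProbabilityMeasure

lemma ae_eq_one_or_eq_neg_one (h : IsRademacherVector μ ξ) :
    ∀ᵐ ω ∂μ, ∀ i, ξ ω i = 1 ∨ ξ ω i = -1 := by
  refine ae_all_iff.2 fun i => ae_of_ae_map (h.1 i).aemeasurable (p := fun x => x = 1 ∨ x = -1) ?_
  rw [h.2.2 i, rademacherDist, ae_add_measure_iff]
  exact ⟨Measure.ae_smul_measure (by simp [ae_dirac_eq]) _,
    Measure.ae_smul_measure (by simp [ae_dirac_eq]) _⟩

lemma integral_prod_pow (h : IsRademacherVector μ ξ) (m : Fin q → ℕ) :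
    ∫ ω, ∏ t, ξ ω t ^ m t ∂μ = if ∀ t, Even (m t) then 1 else 0 := by
  calc ∫ ω, ∏ t, ξ ω t ^ m t ∂μ = ∏ t, ∫ ω, ξ ω t ^ m t ∂μ :=
        h.2.1.integral_fun_prod_comp (f := fun t x => x ^ m t) (fun t => (h.1 t).aemeasurable)
          (fun t => by fun_prop)
    _ = ∏ t, ∫ x, x ^ m t ∂rademacherDist := by
        refine Finset.prod_congr rfl fun t _ => ?_
        rw [← h.2.2 t, integral_map (h.1 t).aemeasurable (by fun_prop)]
    _ = _ := by simp_rw [integral_rademacherDist_pow, Fintype.prod_boole]; congr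

lemma memLp_top (h : IsRademacherVector μ ξ) (i : Fin q) : MemLp (fun ω => ξ ω i) ⊤ μ := by
  refine memLp_top_of_bound (h.1 i).aestronglyMeasurable 1 ?_
  filter_upwards [h.ae_eq_one_or_eq_neg_one] with ω hω
  rcases hω i with hi | hi <;> simp [hi]

lemma memLp_mul (h : IsRademacherVector μ ξ) (i j : Fin q) (p : ℝ≥0∞) :
    MemLp (fun ω => ξ ω i * ξ ω j) p μ :=
  have := h.isProbabilityMeasure
  ((h.memLp_top j).mul' (h.memLp_top i)).mono_exponent le_top

lemma integral_mul (h : IsRademacherVector μ ξ) (i j : Fin q) :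
    ∫ ω, ξ ω i * ξ ω j ∂μ = if i = j then 1 else 0 := by
  have hmono (ω : Ω) : ξ ω i * ξ ω j =
      ∏ t, ξ ω t ^ ((if i = t then 1 else 0) + (if j = t then 1 else 0)) := by
    simp only [pow_add, Finset.prod_mul_distrib, Finset.prod_pow_boole, Finset.mem_univ, if_true]
  simp_rw [hmono, h.integral_prod_pow, forall_even_boole_add_boole_iff]

lemma integral_mul_mul_mul (h : IsRademacherVector μ ξ) (i j k l : Fin q) :
    ∫ ω, ξ ω i * ξ ω j * ξ ω k * ξ ω l ∂μ =
      if (i = j ∧ k = l) ∨ (i = k ∧ j = l) ∨ (i = l ∧ j = k) then 1 else 0 := by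
  have hmono (ω : Ω) : ξ ω i * ξ ω j * ξ ω k * ξ ω l =
      ∏ t, ξ ω t ^ ((if i = t then 1 else 0) + (if j = t then 1 else 0) +
        (if k = t then 1 else 0) + (if l = t then 1 else 0)) := by
    simp only [pow_add, Finset.prod_mul_distrib, Finset.prod_pow_boole, Finset.mem_univ, if_true]
  simp_rw [hmono, h.integral_prod_pow, forall_even_boole_add_boole_add_boole_add_boole_iff]

lemma covariance_mul_mul (h : IsRademacherVector μ ξ) (i j k l : Fin q) :
    cov[fun ω => ξ ω i * ξ ω j, fun ω => ξ ω k * ξ ω l; μ] =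
      if i = j then 0 else
        (if i = k ∧ j = l then 1 else 0) + (if i = l ∧ j = k then 1 else 0) := by
  have := h.isProbabilityMeasure
  rw [covariance_eq_sub (h.memLp_mul i j 2) (h.memLp_mul k l 2)]
  simp only [Pi.mul_apply, ← mul_assoc]
  rw [h.integral_mul_mul_mul, h.integral_mul, h.integral_mul]
  split_ifs <;> grind

lemma memLp_dotProduct_mulVec (h : IsRademacherVector μ ξ) (A : Matrix (Fin q) (Fin q) ℝ) :
    MemLp (fun ω => ξ ω ⬝ᵥ A *ᵥ ξ ω) 2 μ := by
  simp_rw [dotProduct_mulVec_self_eq_sum]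
  exact memLp_finsetSum _ fun p _ => (h.memLp_mul _ _ 2).const_mul _

theorem variance_dotProduct_mulVec (h : IsRademacherVector μ ξ) (A : Matrix (Fin q) (Fin q) ℝ) :
    Var[fun ω => ξ ω ⬝ᵥ A *ᵥ ξ ω; μ] =
      ∑ p ∈ Finset.univ.filter (fun p : Fin q × Fin q => p.1 ≠ p.2),
        A p.1 p.2 * (A p.1 p.2 + A p.2 p.1) := by
  have := h.isProbabilityMeasure
  simp_rw [dotProduct_mulVec_self_eq_sum]
  rw [variance_fun_sum fun p => (h.memLp_mul _ _ 2).const_mul _]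
  simp_rw [covariance_const_mul_left, covariance_const_mul_right, h.covariance_mul_mul]
  rw [Finset.sum_filter]
  refine Finset.sum_congr rfl fun p _ => ?_
  by_cases hp : p.1 = p.2
  · simp [hp]
  · simp [hp, Fintype.sum_prod_type, mul_add, Finset.sum_add_distrib, ite_and]

end IsRademacherVector

lemma ProbabilityTheory.iIndepFun.variance_average {Ω ι : Type*} [MeasurableSpace Ω]
    {μ : Measure Ω} [Fintype ι] {Y : ι → Ω → ℝ} (hY : iIndepFun Y μ)
    (hmem : ∀ k, MemLp (Y k) 2 μ) {v : ℝ} (hv : ∀ k, Var[Y k; μ] = v) :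
    Var[fun ω => (1 / (Fintype.card ι : ℝ)) * ∑ k, Y k ω; μ] = v / Fintype.card ι := by
  have hsum : Var[fun ω => ∑ k, Y k ω; μ] = Fintype.card ι * v := by
    rw [← Finset.sum_fn, IndepFun.variance_sum (fun k _ => hmem k)
      (fun i _ j _ hij => hY.indepFun hij)]
    simp [hv]
  rw [variance_const_mul, hsum]
  rcases eq_or_ne (Fintype.card ι : ℝ) 0 with hι | hι
  · simp [hι]
  · field_simp

theorem sample_average_trace_estimator_variance_general
    {q n : ℕ}
    (A : Matrix (Fin q) (Fin q) ℝ) (hA : A.IsSymm)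
    {Ω : Type*} [MeasurableSpace Ω] (μ : Measure Ω)
    (ξ : Fin n → Ω → Fin q → ℝ)
    (hindep : iIndepFun (fun k ω => ξ k ω) μ)
    (hrad : ∀ k, IsRademacherVector μ (ξ k)) :
    variance (fun ω => (1 / (n : ℝ)) * ∑ k, (ξ k ω) ⬝ᵥ (A *ᵥ (ξ k ω))) μ =
      (2 / (n : ℝ)) *
        ∑ p ∈ Finset.univ.filter (fun p : Fin q × Fin q => p.1 ≠ p.2), (A p.1 p.2) ^ 2 := by
  have hquad : Measurable fun v : Fin q → ℝ => v ⬝ᵥ A *ᵥ v := by fun_prop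
  have hvar (k : Fin n) : Var[fun ω => ξ k ω ⬝ᵥ A *ᵥ ξ k ω; μ] =
      2 * ∑ p ∈ Finset.univ.filter (fun p : Fin q × Fin q => p.1 ≠ p.2), A p.1 p.2 ^ 2 := by
    rw [(hrad k).variance_dotProduct_mulVec, Finset.mul_sum]
    exact Finset.sum_congr rfl fun p _ => by rw [hA.apply]; ring
  have havg := (hindep.comp _ fun _ => hquad).variance_average
    (fun k => (hrad k).memLp_dotProduct_mulVec A) hvar
  simp only [Fintype.card_fin, Function.comp_apply] at havg
  rw [havg]
  ring

/-- The variance of the sample average trace estimator `(1/n) ∑_{k=1}^n ξ_kᵀ A ξ_k` over `n`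
independent Rademacher random vectors, for a symmetric matrix `A`, equals
`(2/n) ∑_{i ≠ j} A_{ij}²`. -/
theorem sample_average_trace_estimator_variance
    {q n : ℕ} (hq : 0 < q) (hn : 0 < n)
    (A : Matrix (Fin q) (Fin q) ℝ) (hA : A.IsSymm)
    {Ω : Type*} [MeasurableSpace Ω] (μ : Measure Ω) [IsProbabilityMeasure μ]
    (ξ : Fin n → Ω → Fin q → ℝ)
    (hindep : iIndepFun (fun k ω => ξ k ω) μ)
    (hrad : ∀ k, IsRademacherVector μ (ξ k)) :
    variance (fun ω => (1 / (n : ℝ)) * ∑ k, (ξ k ω) ⬝ᵥ (A *ᵥ (ξ k ω))) μ =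
      (2 / (n : ℝ)) *
        ∑ p ∈ Finset.univ.filter (fun p : Fin q × Fin q => p.1 ≠ p.2), (A p.1 p.2) ^ 2 :=
  sample_average_trace_estimator_variance_general A hA μ ξ hindep hrad
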